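/- arXiv:1408.6300 — 2 statements merged into one kernel-verified Lean document; each statement's English description precedes it below -/
import Mathlib

section
/- The curves λ ↦ (t(λ), x(λ), z(λ)) given by z(λ) = a√(1-x₀²)√(1-x₀²+a²x₀²)/(a(1-x₀²)λ + √(1-x₀²+a²x₀²)), x(λ) = x₀(a(1-a²)(1-x₀²)λ + √(1-x₀²+a²x₀²))/(a(1-x₀²)λ + √(1-x₀²+a²x₀²)), t(λ) = a²(1-x₀²)√(1-x₀²+a²x₀²)λ/(a(1-x₀²)λ + √(1-x₀²+a²x₀²)) are null curves for the Poincaré AdS₃ metric, i.e. satisfy -t'(λ)² + x'(λ)² + z'(λ)² = 0 for all λ ≥ 0. -/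
/-!
All three coordinates are linear fractional functions of `λ` with the common denominator
`a (1 - x₀²) λ + s`, where `s = √(1 - x₀² + a²x₀²)`. The derivative of `(p λ + q) / (c λ + d)` is
`(p d - q c) / (c λ + d)²`, so the null condition reduces to one identity between the three constants
`p d - q c`; up to the common factor `a⁴ (1 - x₀²)² s²` it reads `s² = (1 - x₀²) + a² x₀²`.
-/

noncomputable def linearFractional (p q c d : ℝ) (l : ℝ) : ℝ := (p * l + q) / (c * l + d)

theorem hasDerivAt_linearFractional (p q c d l : ℝ) (hl : c * l + d ≠ 0) :
    HasDerivAt (linearFractional p q c d) ((p * d - q * c) / (c * l + d) ^ 2) l := by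
  have hnum : HasDerivAt (fun l => p * l + q) p l := by
    simpa using ((hasDerivAt_id l).const_mul p).add_const q
  have hden : HasDerivAt (fun l => c * l + d) c l := by
    simpa using ((hasDerivAt_id l).const_mul c).add_const d
  exact (hnum.div hden hl).congr_deriv (by ring)

theorem linearFractional_null {pt qt px qx pz qz c d l : ℝ} (hl : c * l + d ≠ 0)
    (h : -(pt * d - qt * c) ^ 2 + (px * d - qx * c) ^ 2 + (pz * d - qz * c) ^ 2 = 0) :
    -(deriv (linearFractional pt qt c d) l) ^ 2 + (deriv (linearFractional px qx c d) l) ^ 2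
      + (deriv (linearFractional pz qz c d) l) ^ 2 = 0 := by
  rw [(hasDerivAt_linearFractional pt qt c d l hl).deriv,
    (hasDerivAt_linearFractional px qx c d l hl).deriv,
    (hasDerivAt_linearFractional pz qz c d l hl).deriv, div_pow, div_pow, div_pow, ← neg_div,
    ← add_div, ← add_div, h, zero_div]

/-- The curves `λ ↦ (t(λ), x(λ), z(λ))` of the congruence emanating from the ellipse
`x² + z²/a² = 1, t = 0` in Poincaré AdS₃ (metric `ds² = z⁻²(-dt² + dx² + dz²)`) are null:
`-t'(λ)² + x'(λ)² + z'(λ)² = 0` for all `λ ≥ 0`. -/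
theorem congruence_curves_are_null (a x₀ : ℝ) (ha : 0 < a) (hx : |x₀| < 1) :
    (let s : ℝ := Real.sqrt (1 - x₀ ^ 2 + a ^ 2 * x₀ ^ 2)
     let den : ℝ → ℝ := fun l => a * (1 - x₀ ^ 2) * l + s
     let zf : ℝ → ℝ := fun l => a * Real.sqrt (1 - x₀ ^ 2) * s / den l
     let xf : ℝ → ℝ := fun l => x₀ * (a * (1 - a ^ 2) * (1 - x₀ ^ 2) * l + s) / den l
     let tf : ℝ → ℝ := fun l => a ^ 2 * (1 - x₀ ^ 2) * s * l / den l
     ∀ l : ℝ, 0 ≤ l →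
       -(deriv tf l) ^ 2 + (deriv xf l) ^ 2 + (deriv zf l) ^ 2 = 0) := by
  intro s den zf xf tf l hl
  have hx2 : 0 < 1 - x₀ ^ 2 := by nlinarith [sq_abs x₀, abs_nonneg x₀]
  have hr2 : Real.sqrt (1 - x₀ ^ 2) ^ 2 = 1 - x₀ ^ 2 := Real.sq_sqrt hx2.le
  have hs2 : s ^ 2 = 1 - x₀ ^ 2 + a ^ 2 * x₀ ^ 2 := Real.sq_sqrt (by positivity)
  have hs : 0 < s := Real.sqrt_pos.mpr (by positivity)
  have hden : a * (1 - x₀ ^ 2) * l + s ≠ 0 := by positivity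
  have htf : tf = linearFractional (a ^ 2 * (1 - x₀ ^ 2) * s) 0 (a * (1 - x₀ ^ 2)) s := by
    funext l; simp only [tf, den, linearFractional, add_zero]
  have hxf : xf = linearFractional (x₀ * (a * (1 - a ^ 2) * (1 - x₀ ^ 2))) (x₀ * s)
      (a * (1 - x₀ ^ 2)) s := by
    funext l; simp only [xf, den, linearFractional]; ring
  have hzf : zf = linearFractional 0 (a * Real.sqrt (1 - x₀ ^ 2) * s) (a * (1 - x₀ ^ 2)) s := by
    funext l; simp only [zf, den, linearFractional, zero_mul, zero_add]
  rw [htf, hxf, hzf]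
  refine linearFractional_null hden ?_
  linear_combination (a ^ 4 * (1 - x₀ ^ 2) ^ 2 * s ^ 2) * hr2 -
    (a ^ 4 * (1 - x₀ ^ 2) ^ 2 * s ^ 2) * hs2
end

section
/- For a > 1 and x₀ ∈ (-1,1), the geodesics of the congruence starting at x₀ and at -x₀ intersect at the point x = 0, t = √(1-x₀²+a²x₀²)/a, z = ((a²-1)/a)√(1-x₀²), which is reached at affine parameter λ_× = √(1-x₀²+a²x₀²)/(a(a²-1)(1-x₀²)). -/
/-! At `λ_×` the numerator `a(1-a²)(1-x₀²)λ + s` of `x(λ)` vanishes, while the denominator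
`a(1-x₀²)λ + s` equals `a² s/(a²-1)`; this gives the common point on the geodesic from `x₀`.
The curves depend on `x₀` only through `x₀²`, except for the overall factor `x₀` in `x(λ)`, so the
geodesic from `-x₀` is the mirror image `x ↦ -x` of the one from `x₀` and meets it on `x = 0`. -/

namespace NullCongruence

variable (a : ℝ)

/-! `x a y l`, `t a y l`, `z a y l` are the coordinates at affine parameter `l` of the null geodesic
leaving the ellipse `x² + z²/a² = 1` at `x = y`. -/

noncomputable def root (y : ℝ) : ℝ := Real.sqrt (1 - y ^ 2 + a ^ 2 * y ^ 2)

noncomputable def den (y l : ℝ) : ℝ := a * (1 - y ^ 2) * l + root a y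

noncomputable def x (y l : ℝ) : ℝ := y * (a * (1 - a ^ 2) * (1 - y ^ 2) * l + root a y) / den a y l

noncomputable def t (y l : ℝ) : ℝ := a ^ 2 * (1 - y ^ 2) * root a y * l / den a y l

noncomputable def z (y l : ℝ) : ℝ := a * Real.sqrt (1 - y ^ 2) * root a y / den a y l

noncomputable def crossingParam (y : ℝ) : ℝ := root a y / (a * (a ^ 2 - 1) * (1 - y ^ 2))

lemma root_neg (y : ℝ) : root a (-y) = root a y := by
  simp only [root, neg_sq]

lemma den_neg (y l : ℝ) : den a (-y) l = den a y l := by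
  simp only [den, neg_sq, root_neg]

lemma x_neg (y l : ℝ) : x a (-y) l = -x a y l := by
  simp only [x, neg_sq, root_neg, den_neg, neg_mul, neg_div]

lemma t_neg (y l : ℝ) : t a (-y) l = t a y l := by
  simp only [t, neg_sq, root_neg, den_neg]

lemma z_neg (y l : ℝ) : z a (-y) l = z a y l := by
  simp only [z, neg_sq, root_neg, den_neg]

variable {a} {y : ℝ}

lemma x_crossingParam (ha : a ≠ 0) (ha2 : a ^ 2 ≠ 1) (hy : y ^ 2 ≠ 1) :
    x a y (crossingParam a y) = 0 := by
  have ha2' : a ^ 2 - 1 ≠ 0 := sub_ne_zero.mpr ha2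
  have hy' : 1 - y ^ 2 ≠ 0 := sub_ne_zero.mpr hy.symm
  have hnum : a * (1 - a ^ 2) * (1 - y ^ 2) * crossingParam a y + root a y = 0 := by
    rw [crossingParam]
    field_simp
    ring
  rw [x, hnum, mul_zero, zero_div]

lemma den_crossingParam (ha : a ≠ 0) (ha2 : a ^ 2 ≠ 1) (hy : y ^ 2 ≠ 1) :
    den a y (crossingParam a y) = a ^ 2 / (a ^ 2 - 1) * root a y := by
  have ha2' : a ^ 2 - 1 ≠ 0 := sub_ne_zero.mpr ha2
  have hy' : 1 - y ^ 2 ≠ 0 := sub_ne_zero.mpr hy.symm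
  rw [den, crossingParam]
  field_simp
  ring

lemma t_crossingParam (ha : a ≠ 0) (ha2 : a ^ 2 ≠ 1) (hy : y ^ 2 ≠ 1) (hr : root a y ≠ 0) :
    t a y (crossingParam a y) = root a y / a := by
  have ha2' : a ^ 2 - 1 ≠ 0 := sub_ne_zero.mpr ha2
  have hy' : 1 - y ^ 2 ≠ 0 := sub_ne_zero.mpr hy.symm
  rw [t, den_crossingParam ha ha2 hy, crossingParam]
  field_simp

lemma z_crossingParam (ha : a ≠ 0) (ha2 : a ^ 2 ≠ 1) (hy : y ^ 2 ≠ 1) (hr : root a y ≠ 0) :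
    z a y (crossingParam a y) = (a ^ 2 - 1) / a * Real.sqrt (1 - y ^ 2) := by
  have ha2' : a ^ 2 - 1 ≠ 0 := sub_ne_zero.mpr ha2
  rw [z, den_crossingParam ha ha2 hy]
  field_simp

lemma root_pos (hy : y ^ 2 < 1) : 0 < root a y :=
  Real.sqrt_pos.mpr (by nlinarith [sq_nonneg (a * y)])

end NullCongruence

open NullCongruence in
/-- For `a > 1` and `x₀ ∈ (-1,1)`, the null geodesics of the congruence (from the ellipse
`x² + z²/a² = 1, t = 0` in Poincaré AdS₃) starting at `x₀` and at `-x₀` intersect at the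
point `x = 0`, `t = √(1-x₀²+a²x₀²)/a`, `z = ((a²-1)/a)√(1-x₀²)`, reached at affine
parameter `λ_× = √(1-x₀²+a²x₀²)/(a(a²-1)(1-x₀²))`. -/
theorem crossover_point (a x₀ : ℝ) (ha : 1 < a) (hx : |x₀| < 1) :
    (let s : ℝ → ℝ := fun y => Real.sqrt (1 - y ^ 2 + a ^ 2 * y ^ 2)
     let den : ℝ → ℝ → ℝ := fun y l => a * (1 - y ^ 2) * l + s y
     let zf : ℝ → ℝ → ℝ := fun y l => a * Real.sqrt (1 - y ^ 2) * s y / den y l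
     let xf : ℝ → ℝ → ℝ := fun y l => y * (a * (1 - a ^ 2) * (1 - y ^ 2) * l + s y) / den y l
     let tf : ℝ → ℝ → ℝ := fun y l => a ^ 2 * (1 - y ^ 2) * s y * l / den y l
     let lx : ℝ := s x₀ / (a * (a ^ 2 - 1) * (1 - x₀ ^ 2))
     xf x₀ lx = 0 ∧ xf (-x₀) lx = 0 ∧
     tf x₀ lx = s x₀ / a ∧ tf (-x₀) lx = s x₀ / a ∧
     zf x₀ lx = (a ^ 2 - 1) / a * Real.sqrt (1 - x₀ ^ 2) ∧
     zf (-x₀) lx = (a ^ 2 - 1) / a * Real.sqrt (1 - x₀ ^ 2)) := by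
  have hx2 : x₀ ^ 2 < 1 := by rwa [← sq_abs, sq_lt_one_iff₀ (abs_nonneg x₀)]
  have ha0 : a ≠ 0 := by positivity
  have ha2 : a ^ 2 ≠ 1 := (one_lt_pow₀ ha two_ne_zero).ne'
  have hy : x₀ ^ 2 ≠ 1 := hx2.ne
  have hr : root a x₀ ≠ 0 := (root_pos hx2).ne'
  have hxc := x_crossingParam ha0 ha2 hy
  have htc := t_crossingParam ha0 ha2 hy hr
  have hzc := z_crossingParam ha0 ha2 hy hr
  refine ⟨hxc, ?_, htc, ?_, hzc, ?_⟩
  · change x a (-x₀) (crossingParam a x₀) = 0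
    rw [x_neg, hxc, neg_zero]
  · exact (t_neg a x₀ _).trans htc
  · exact (z_neg a x₀ _).trans hzc
end
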